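/- Let V₁ and V₂ be nonempty finite types, v*, v† ∈ V₁, and α > 1 a real number. Let D₁ be a jointly convex divergence on S(V₁) and D₂ a jointly convex divergence on S(V₁ × V₁). Fix weights p_J, p₁, p₂ ∈ S(V₂) and maps Ψ_J : V₂ → S(V₁ × V₁) and Ψ₁, Ψ₂ : V₂ → S(V₁), and set F_J := ∑ v, p_J(v) • Ψ_J(v), F₁ := ∑ v, p₁(v) • Ψ₁(v), F₂ := ∑ v, p₂(v) • Ψ₂(v). Assume F₁(v*) > 0, F₂(v†) > 0 and the abductive factorization F_J(v*, v†) = α · F₁(v*) · F₂(v†). Then there exists ε₀ > 0 such that for all families J : V₂ → S(V₁ × V₁) and M₁, M₂ : V₂ → S(V₁) satisfying ∑ v, p_J(v) · D₂ (Ψ_J v) (J v) ≤ ε₀, ∑ v, p₁(v) · D₁ (Ψ₁ v) (M₁ v) ≤ ε₀, and ∑ v, p₂(v) · D₁ (Ψ₂ v) (M₂ v) ≤ ε₀, the mixtures G_J := ∑ v, p_J(v) • J v, G₁ := ∑ v, p₁(v) • M₁ v, G₂ := ∑ v, p₂(v) • M₂ v satisfy G_J(v*, v†) > G₁(v*) ·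 G₂(v†). -/

import Mathlib

open scoped BigOperators

/-- A divergence on the probability simplex `stdSimplex ℝ W`: continuous (in the
subspace topology on the simplex), nonnegative, and vanishing exactly on the diagonal. -/
def IsDivergence {W : Type*} [Fintype W] (D : (W → ℝ) → (W → ℝ) → ℝ) : Prop :=
  ContinuousOn (fun pq : (W → ℝ) × (W → ℝ) => D pq.1 pq.2)
      (stdSimplex ℝ W ×ˢ stdSimplex ℝ W) ∧
    (∀ p ∈ stdSimplex ℝ W, ∀ q ∈ stdSimplex ℝ W, 0 ≤ D p q) ∧
    (∀ p ∈ stdSimplex ℝ W, ∀ q ∈ stdSimplex ℝ W, (D p q = 0 ↔ p = q))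

/-- `D` is jointly convex on the simplex. -/
def JointlyConvexDiv {W : Type*} [Fintype W] (D : (W → ℝ) → (W → ℝ) → ℝ) : Prop :=
  ∀ p₁ ∈ stdSimplex ℝ W, ∀ p₂ ∈ stdSimplex ℝ W, ∀ q₁ ∈ stdSimplex ℝ W,
    ∀ q₂ ∈ stdSimplex ℝ W, ∀ t ∈ Set.Icc (0 : ℝ) 1,
      D (t • p₁ + (1 - t) • p₂) (t • q₁ + (1 - t) • q₂) ≤
        t * D p₁ q₁ + (1 - t) * D p₂ q₂

/-!
Joint convexity bounds the divergence between the mixtures `F` and `G` by the weighted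
divergence of their components, and on the compact simplex a small divergence from `F`
forces `G` into any prescribed neighbourhood of `F`. The strict inequality
`G₁(v*) · G₂(v†) < G_J(v*, v†)` is an open condition on `(G_J, G₁, G₂)`, and it holds at
`(F_J, F₁, F₂)` because `F₁(v*) F₂(v†) < α F₁(v*) F₂(v†) = F_J(v*, v†)`.
-/

open Filter Topology

lemma sum_smul_mem_stdSimplex {W V : Type*} [Fintype W] [Fintype V] {p : V → ℝ}
    (hp : p ∈ stdSimplex ℝ V) {Ψ : V → W → ℝ} (hΨ : ∀ v, Ψ v ∈ stdSimplex ℝ W) :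
    ∑ v, p v • Ψ v ∈ stdSimplex ℝ W :=
  (convex_stdSimplex ℝ W).sum_mem (fun v _ => hp.1 v) hp.2 (fun v _ => hΨ v)

section

variable {W : Type*} [Fintype W] {D : (W → ℝ) → (W → ℝ) → ℝ}

lemma JointlyConvexDiv.convexOn (hD : JointlyConvexDiv D) :
    ConvexOn ℝ (stdSimplex ℝ W ×ˢ stdSimplex ℝ W) fun pq => D pq.1 pq.2 := by
  refine ⟨(convex_stdSimplex ℝ W).prod (convex_stdSimplex ℝ W), ?_⟩
  rintro x ⟨hx₁, hx₂⟩ y ⟨hy₁, hy₂⟩ a b ha hb hab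
  obtain rfl : b = 1 - a := by linarith
  exact hD x.1 hx₁ y.1 hy₁ x.2 hx₂ y.2 hy₂ a ⟨ha, by linarith⟩

lemma JointlyConvexDiv.map_sum_le (hD : JointlyConvexDiv D) {V : Type*} [Fintype V]
    {p : V → ℝ} (hp : p ∈ stdSimplex ℝ V) {Ψ M : V → W → ℝ}
    (hΨ : ∀ v, Ψ v ∈ stdSimplex ℝ W) (hM : ∀ v, M v ∈ stdSimplex ℝ W) :
    D (∑ v, p v • Ψ v) (∑ v, p v • M v) ≤ ∑ v, p v * D (Ψ v) (M v) := by
  simpa [Prod.fst_sum, Prod.snd_sum] using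
    hD.convexOn.map_sum_le (t := Finset.univ) (p := fun v => (Ψ v, M v))
      (fun v _ => hp.1 v) hp.2 (fun v _ => ⟨hΨ v, hM v⟩)

lemma IsDivergence.exists_forall_mem_of_mem_nhds (hD : IsDivergence D) {F : W → ℝ}
    (hF : F ∈ stdSimplex ℝ W) {U : Set (W → ℝ)} (hU : U ∈ 𝓝 F) :
    ∃ ε > 0, ∀ q ∈ stdSimplex ℝ W, D F q ≤ ε → q ∈ U := by
  obtain ⟨t, htU, ht, hFt⟩ := mem_nhds_iff.1 hU
  have hcont : ContinuousOn (D F) (stdSimplex ℝ W) :=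
    hD.1.comp (Continuous.prodMk_right F).continuousOn fun q hq => ⟨hF, hq⟩
  -- Off the open set `t ∋ F` the divergence is positive, hence bounded below on this compact set.
  have hpos : ∀ q ∈ stdSimplex ℝ W \ t, 0 < D F q := fun q ⟨hq, hqt⟩ =>
    (hD.2.1 F hF q hq).lt_of_ne fun h =>
      hqt (((hD.2.2 F hF q hq).1 h.symm) ▸ hFt)
  obtain ⟨ε, hε, hεle⟩ :=
    ((isCompact_stdSimplex ℝ W).diff ht).exists_forall_le' (hcont.mono Set.sdiff_subset) hpos
  refine ⟨ε / 2, half_pos hε, fun q hq hqε => htU ?_⟩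
  by_contra hqt
  linarith [hεle q ⟨hq, hqt⟩]

lemma IsDivergence.exists_forall_sum_smul_mem_of_mem_nhds (hD : IsDivergence D)
    (hconv : JointlyConvexDiv D) {V : Type*} [Fintype V] {p : V → ℝ}
    (hp : p ∈ stdSimplex ℝ V) {Ψ : V → W → ℝ} (hΨ : ∀ v, Ψ v ∈ stdSimplex ℝ W)
    {U : Set (W → ℝ)} (hU : U ∈ 𝓝 (∑ v, p v • Ψ v)) :
    ∃ ε > 0, ∀ M : V → W → ℝ, (∀ v, M v ∈ stdSimplex ℝ W) →
      ∑ v, p v * D (Ψ v) (M v) ≤ ε → ∑ v, p v • M v ∈ U := by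
  obtain ⟨ε, hε, hεU⟩ := hD.exists_forall_mem_of_mem_nhds (sum_smul_mem_stdSimplex hp hΨ) hU
  exact ⟨ε, hε, fun M hM hMε =>
    hεU _ (sum_smul_mem_stdSimplex hp hM) ((hconv.map_sum_le hp hΨ hM).trans hMε)⟩

end

theorem abduction_scientist_to_universe_general
    {V₁ V₂ : Type*} [Fintype V₁] [Fintype V₂]
    (vstar vdag : V₁) (α : ℝ) (hα : 1 < α)
    (D₁ : (V₁ → ℝ) → (V₁ → ℝ) → ℝ) (hD₁ : IsDivergence D₁)
    (hD₁conv : JointlyConvexDiv D₁)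
    (D₂ : (V₁ × V₁ → ℝ) → (V₁ × V₁ → ℝ) → ℝ) (hD₂ : IsDivergence D₂)
    (hD₂conv : JointlyConvexDiv D₂)
    (pJ p₁ p₂ : V₂ → ℝ) (hpJ : pJ ∈ stdSimplex ℝ V₂)
    (hp₁ : p₁ ∈ stdSimplex ℝ V₂) (hp₂ : p₂ ∈ stdSimplex ℝ V₂)
    (ΨJ : V₂ → V₁ × V₁ → ℝ) (hΨJ : ∀ v, ΨJ v ∈ stdSimplex ℝ (V₁ × V₁))
    (Ψ₁ Ψ₂ : V₂ → V₁ → ℝ) (hΨ₁ : ∀ v, Ψ₁ v ∈ stdSimplex ℝ V₁)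
    (hΨ₂ : ∀ v, Ψ₂ v ∈ stdSimplex ℝ V₁)
    (FJ : V₁ × V₁ → ℝ) (hFJdef : FJ = ∑ v : V₂, pJ v • ΨJ v)
    (F₁ : V₁ → ℝ) (hF₁def : F₁ = ∑ v : V₂, p₁ v • Ψ₁ v)
    (F₂ : V₁ → ℝ) (hF₂def : F₂ = ∑ v : V₂, p₂ v • Ψ₂ v)
    (hF₁pos : 0 < F₁ vstar) (hF₂pos : 0 < F₂ vdag)
    (hfact : FJ (vstar, vdag) = α * F₁ vstar * F₂ vdag) :
    ∃ ε₀ : ℝ, 0 < ε₀ ∧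
      ∀ (J : V₂ → V₁ × V₁ → ℝ) (M₁ M₂ : V₂ → V₁ → ℝ),
        (∀ v, J v ∈ stdSimplex ℝ (V₁ × V₁)) →
        (∀ v, M₁ v ∈ stdSimplex ℝ V₁) →
        (∀ v, M₂ v ∈ stdSimplex ℝ V₁) →
        (∑ v : V₂, pJ v * D₂ (ΨJ v) (J v)) ≤ ε₀ →
        (∑ v : V₂, p₁ v * D₁ (Ψ₁ v) (M₁ v)) ≤ ε₀ →
        (∑ v : V₂, p₂ v * D₁ (Ψ₂ v) (M₂ v)) ≤ ε₀ →
        (∑ v : V₂, p₁ v • M₁ v) vstar * (∑ v : V₂, p₂ v • M₂ v) vdag <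
          (∑ v : V₂, pJ v • J v) (vstar, vdag) := by
  have hF : F₁ vstar * F₂ vdag < FJ (vstar, vdag) := by
    rw [hfact, mul_assoc]
    exact lt_mul_left (mul_pos hF₁pos hF₂pos) hα
  have hnhds : ∀ᶠ G in 𝓝 (FJ, F₁, F₂), G.2.1 vstar * G.2.2 vdag < G.1 (vstar, vdag) :=
    ContinuousAt.eventually_lt (by fun_prop) (by fun_prop) hF
  simp only [nhds_prod_eq, eventually_prod_iff] at hnhds
  obtain ⟨PJ, hPJ, Q, ⟨P₁, hP₁, P₂, hP₂, hQ⟩, hPJQ⟩ := hnhds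
  subst hFJdef hF₁def hF₂def
  obtain ⟨εJ, hεJ, hJ⟩ := hD₂.exists_forall_sum_smul_mem_of_mem_nhds hD₂conv hpJ hΨJ hPJ
  obtain ⟨ε₁, hε₁, h₁⟩ := hD₁.exists_forall_sum_smul_mem_of_mem_nhds hD₁conv hp₁ hΨ₁ hP₁
  obtain ⟨ε₂, hε₂, h₂⟩ := hD₁.exists_forall_sum_smul_mem_of_mem_nhds hD₁conv hp₂ hΨ₂ hP₂
  refine ⟨min εJ (min ε₁ ε₂), by positivity, fun J M₁ M₂ hJs hM₁s hM₂s hbJ hb₁ hb₂ => ?_⟩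
  exact hPJQ (hJ J hJs (hbJ.trans (min_le_left _ _)))
    (hQ (h₁ M₁ hM₁s (hb₁.trans ((min_le_right _ _).trans (min_le_left _ _))))
      (h₂ M₂ hM₂s (hb₂.trans ((min_le_right _ _).trans (min_le_right _ _)))))

/-- **Abductive beliefs of an embedded scientist transfer to the universe.**
If the scientist's embedded prediction distributions `F_J, F₁, F₂` (mixtures of the
answer-interpretations `Ψ` under the scientist's response weights) satisfy the abductive
factorization with `α > 1`, then there is `ε₀ > 0` such that for any families of universe
response distributions `J, M₁, M₂` within the embed-calibration bounds, the corresponding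
mixtures `G_J, G₁, G₂` satisfy `G_J(v*, v†) > G₁(v*) · G₂(v†)`. -/
theorem abduction_scientist_to_universe
    {V₁ V₂ : Type*} [Fintype V₁] [Nonempty V₁] [Fintype V₂] [Nonempty V₂]
    (vstar vdag : V₁) (α : ℝ) (hα : 1 < α)
    (D₁ : (V₁ → ℝ) → (V₁ → ℝ) → ℝ) (hD₁ : IsDivergence D₁)
    (hD₁conv : JointlyConvexDiv D₁)
    (D₂ : (V₁ × V₁ → ℝ) → (V₁ × V₁ → ℝ) → ℝ) (hD₂ : IsDivergence D₂)
    (hD₂conv : JointlyConvexDiv D₂)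
    (pJ p₁ p₂ : V₂ → ℝ) (hpJ : pJ ∈ stdSimplex ℝ V₂)
    (hp₁ : p₁ ∈ stdSimplex ℝ V₂) (hp₂ : p₂ ∈ stdSimplex ℝ V₂)
    (ΨJ : V₂ → V₁ × V₁ → ℝ) (hΨJ : ∀ v, ΨJ v ∈ stdSimplex ℝ (V₁ × V₁))
    (Ψ₁ Ψ₂ : V₂ → V₁ → ℝ) (hΨ₁ : ∀ v, Ψ₁ v ∈ stdSimplex ℝ V₁)
    (hΨ₂ : ∀ v, Ψ₂ v ∈ stdSimplex ℝ V₁)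
    (FJ : V₁ × V₁ → ℝ) (hFJdef : FJ = ∑ v : V₂, pJ v • ΨJ v)
    (F₁ : V₁ → ℝ) (hF₁def : F₁ = ∑ v : V₂, p₁ v • Ψ₁ v)
    (F₂ : V₁ → ℝ) (hF₂def : F₂ = ∑ v : V₂, p₂ v • Ψ₂ v)
    (hF₁pos : 0 < F₁ vstar) (hF₂pos : 0 < F₂ vdag)
    (hfact : FJ (vstar, vdag) = α * F₁ vstar * F₂ vdag) :
    ∃ ε₀ : ℝ, 0 < ε₀ ∧
      ∀ (J : V₂ → V₁ × V₁ → ℝ) (M₁ M₂ : V₂ → V₁ → ℝ),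
        (∀ v, J v ∈ stdSimplex ℝ (V₁ × V₁)) →
        (∀ v, M₁ v ∈ stdSimplex ℝ V₁) →
        (∀ v, M₂ v ∈ stdSimplex ℝ V₁) →
        (∑ v : V₂, pJ v * D₂ (ΨJ v) (J v)) ≤ ε₀ →
        (∑ v : V₂, p₁ v * D₁ (Ψ₁ v) (M₁ v)) ≤ ε₀ →
        (∑ v : V₂, p₂ v * D₁ (Ψ₂ v) (M₂ v)) ≤ ε₀ →
        (∑ v : V₂, p₁ v • M₁ v) vstar * (∑ v : V₂, p₂ v • M₂ v) vdag <
          (∑ v : V₂, pJ v • J v) (vstar, vdag) :=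
  abduction_scientist_to_universe_general vstar vdag α hα D₁ hD₁ hD₁conv D₂ hD₂ hD₂conv pJ p₁ p₂ hpJ
    hp₁ hp₂ ΨJ hΨJ Ψ₁ Ψ₂ hΨ₁ hΨ₂ FJ hFJdef F₁ hF₁def F₂ hF₂def hF₁pos hF₂pos hfact
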